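/- Let G = (V,E,B) be a directed mixed graph and let P be a partition of its nodes. Let π be a walk on G with induced coarse walk co(π) on co(G,P). If co(π) is σ-blocked by a set S ⊆ P of nodes of co(G,P), then π is σ-blocked by T = ∪_{W∈S} W. -/

import Mathlib

/-! ## Mixed graphs -/

/-- A mixed graph: directed, bidirected and undirected edges, no self-edges. -/
structure MixedGraph (V : Type) where
  dir : V → V → Prop
  bidir : V → V → Prop
  undir : V → V → Prop
  bidir_symm : ∀ {a b}, bidir a b → bidir b a
  undir_symm : ∀ {a b}, undir a b → undir b a
  dir_irrefl : ∀ a, ¬ dir a a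
  bidir_irrefl : ∀ a, ¬ bidir a a
  undir_irrefl : ∀ a, ¬ undir a a

namespace MixedGraph

variable {V I : Type}

/-- A directed mixed graph is a mixed graph without undirected edges. -/
def IsDMG (G : MixedGraph V) : Prop := ∀ a b, ¬ G.undir a b

/-- `a` and `b` lie in the same strongly connected component: there are directed
paths between them in both directions. -/
def Strongly (G : MixedGraph V) (a b : V) : Prop :=
  Relation.ReflTransGen G.dir a b ∧ Relation.ReflTransGen G.dir b a

lemma Strongly.refl (G : MixedGraph V) (a : V) : G.Strongly a a :=
  ⟨Relation.ReflTransGen.refl, Relation.ReflTransGen.refl⟩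

lemma Strongly.symm {G : MixedGraph V} {a b : V} (h : G.Strongly a b) : G.Strongly b a :=
  ⟨h.2, h.1⟩

/-- A graph is acyclic if it has no nontrivial directed closed walk. -/
def Acyclic (G : MixedGraph V) : Prop := ∀ a, ¬ Relation.TransGen G.dir a a

end MixedGraph

/-! ## Walks -/

/-- The four ways in which an edge can occur on a walk, as traversed from its
first node `a` to its second node `b`: `fw` is `a → b`, `bw` is `a ← b`,
`bi` is `a ↔ b` and `un` is `a − b`. -/
inductive StepKind | fw | bw | bi | un
deriving DecidableEq

/-- A step of a walk: an ordered pair of nodes together with the kind of edge. -/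
structure Step (V : Type) where
  a : V
  b : V
  k : StepKind

/-- The step is an actual edge of the graph `G`. -/
def Step.ok {V : Type} (G : MixedGraph V) (s : Step V) : Prop :=
  match s.k with
  | .fw => G.dir s.a s.b
  | .bw => G.dir s.b s.a
  | .bi => G.bidir s.a s.b
  | .un => G.undir s.a s.b

/-- The edge of the step has an arrowhead at its first node. -/
def Step.headA {V : Type} (s : Step V) : Prop := s.k = .bw ∨ s.k = .bi

/-- The edge of the step has an arrowhead at its second node. -/
def Step.headB {V : Type} (s : Step V) : Prop := s.k = .fw ∨ s.k = .bi

namespace MixedGraph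

variable {V I : Type}

/-- `IsWalk G x y L`: the list of steps `L` forms a walk from `x` to `y` in `G`. -/
inductive IsWalk (G : MixedGraph V) : V → V → List (Step V) → Prop
  | nil (a : V) : IsWalk G a a []
  | cons {c : V} (s : Step V) (L : List (Step V)) (hok : s.ok G)
      (hw : IsWalk G s.b c L) : IsWalk G s.a c (s :: L)

/-- `v` is a collider at junction `i` of the walk `L`: both edges adjacent to the
inner node `v` point into `v`. -/
def ColliderAt (L : List (Step V)) (i : ℕ) (v : V) : Prop :=
  ∃ s t, L[i]? = some s ∧ L[i+1]? = some t ∧ s.b = v ∧ t.a = v ∧ s.headB ∧ t.headA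

/-- `v` is a non-collider at junction `i` of the walk `L`. -/
def NonColliderAt (L : List (Step V)) (i : ℕ) (v : V) : Prop :=
  ∃ s t, L[i]? = some s ∧ L[i+1]? = some t ∧ s.b = v ∧ t.a = v ∧ ¬ (s.headB ∧ t.headA)

/-- The walk `L` from `x` to `y` is m-blocked by the node set `S`. -/
def MBlockedWalk (G : MixedGraph V) (S : Set V) (x y : V) (L : List (Step V)) : Prop :=
  x ∈ S ∨ y ∈ S ∨
  (∃ i v, ColliderAt L i v ∧ ∀ d, Relation.ReflTransGen G.dir v d → d ∉ S) ∨
  (∃ i v, NonColliderAt L i v ∧ v ∈ S)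

/-- The walk `L` from `x` to `y` is σ-blocked by the node set `S`. -/
def SigmaBlockedWalk (G : MixedGraph V) (S : Set V) (x y : V) (L : List (Step V)) : Prop :=
  x ∈ S ∨ y ∈ S ∨
  (∃ i v, ColliderAt L i v ∧ ∀ d, Relation.ReflTransGen G.dir v d → d ∉ S) ∨
  (∃ i s t, L[i]? = some s ∧ L[i+1]? = some t ∧ s.b = t.a ∧ ¬ (s.headB ∧ t.headA) ∧
    s.b ∈ S ∧
    (((s.k = .bw ∨ s.k = .un) ∧ ¬ G.Strongly s.b s.a) ∨
     ((t.k = .fw ∨ t.k = .un) ∧ ¬ G.Strongly t.a t.b)))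

/-- `x` and `y` are m-separated by `S` in `G`. -/
def MSep (G : MixedGraph V) (S : Set V) (x y : V) : Prop :=
  ∀ L, G.IsWalk x y L → G.MBlockedWalk S x y L

/-- `x` and `y` are σ-separated by `S` in `G`. -/
def SigmaSep (G : MixedGraph V) (S : Set V) (x y : V) : Prop :=
  ∀ L, G.IsWalk x y L → G.SigmaBlockedWalk S x y L

/-! ## Acyclification -/

/-- The acyclification of a mixed graph. -/
def acy (G : MixedGraph V) : MixedGraph V where
  dir a b := (∃ c, G.dir a c ∧ G.Strongly c b) ∧ ¬ G.Strongly a b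
  bidir a b := a ≠ b ∧ (G.Strongly a b ∨
    ∃ a' b', G.Strongly a a' ∧ G.Strongly b b' ∧ G.bidir a' b')
  undir a b := ¬ G.Strongly a b ∧ G.undir a b
  bidir_symm := by
    rintro a b ⟨hab, h | ⟨a', b', ha, hb, h⟩⟩
    · exact ⟨hab.symm, Or.inl h.symm⟩
    · exact ⟨hab.symm, Or.inr ⟨b', a', hb, ha, G.bidir_symm h⟩⟩
  undir_symm := by
    rintro a b ⟨h1, h2⟩
    exact ⟨fun h => h1 h.symm, G.undir_symm h2⟩
  dir_irrefl := fun a h => h.2 (Strongly.refl G a)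
  bidir_irrefl := fun a h => h.1 rfl
  undir_irrefl := fun a h => h.1 (Strongly.refl G a)

/-! ## Coarse graphs -/

/-- The coarse (quotient) graph of `G` with respect to the partition given by the
quotient map `q` onto the set of groups `I`. -/
def coarse (G : MixedGraph V) (q : V → I) : MixedGraph I where
  dir Y Z := Y ≠ Z ∧ ∃ y z, q y = Y ∧ q z = Z ∧ G.dir y z
  bidir Y Z := Y ≠ Z ∧ ∃ y z, q y = Y ∧ q z = Z ∧ G.bidir y z
  undir Y Z := Y ≠ Z ∧ ∃ y z, q y = Y ∧ q z = Z ∧ G.undir y z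
  bidir_symm := by
    rintro Y Z ⟨hne, y, z, hy, hz, h⟩
    exact ⟨hne.symm, z, y, hz, hy, G.bidir_symm h⟩
  undir_symm := by
    rintro Y Z ⟨hne, y, z, hy, hz, h⟩
    exact ⟨hne.symm, z, y, hz, hy, G.undir_symm h⟩
  dir_irrefl := fun Y h => h.1 rfl
  bidir_irrefl := fun Y h => h.1 rfl
  undir_irrefl := fun Y h => h.1 rfl

end MixedGraph

open Classical in
/-- The coarse walk induced by a micro walk: steps internal to a group are dropped
(collapsing each `P`-segment to the single group containing it) and every
between-group step is replaced by the step of the same kind between the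
corresponding groups. -/
noncomputable def coWalk {V I : Type} (q : V → I) (L : List (Step V)) : List (Step I) :=
  L.filterMap fun s => if q s.a = q s.b then none else some ⟨q s.a, q s.b, s.k⟩

/-!
Around the coarse junction, the micro walk reads `… s, M, t …`, where `s` and `t` are the
consecutive between-group steps realising the two coarse edges and the steps of `M` stay inside
the group `W = q s.b`. If `W` is a coarse collider, `s` points into `W` and `t` points back into
`W`; as a DMG has no undirected edges, every step of `M` has an arrowhead at one end, so two
adjacent steps of `s, M, t` form a micro collider inside `W`, whose descendants lie in descendants
of `W` and hence avoid `q ⁻¹' S`. If `W` is a blocking non-collider, the coarse edge leaving `W`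
is realised by a directed micro edge `s` or `t` leaving `W`, and its endpoint in `W` is a blocking
micro non-collider, because strong connectivity in `G` descends to the coarse graph.
-/
namespace List

variable {α β : Type*}

theorem getElem?_eq_some_and_getElem?_succ_eq_some_iff {l : List α} {i : ℕ} {a b : α} :
    l[i]? = some a ∧ l[i + 1]? = some b ↔ ∃ l₁ l₂, l₁.length = i ∧ l = l₁ ++ a :: b :: l₂ := by
  constructor
  · rintro ⟨ha, hb⟩
    obtain ⟨hi, rfl⟩ := getElem?_eq_some_iff.1 ha
    obtain ⟨hi', rfl⟩ := getElem?_eq_some_iff.1 hb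
    refine ⟨l.take i, l.drop (i + 2), by simp; omega, ?_⟩
    conv_lhs => rw [← take_append_drop i l, drop_eq_getElem_cons hi, drop_eq_getElem_cons hi']
  · rintro ⟨l₁, l₂, rfl, rfl⟩
    simp

theorem exists_of_filterMap_eq_append_cons_cons {f : α → Option β} {l : List α}
    {l₁ l₂ : List β} {b c : β} (h : l.filterMap f = l₁ ++ b :: c :: l₂) :
    ∃ k₁ a m a' k₂, l = k₁ ++ a :: (m ++ a' :: k₂) ∧ f a = some b ∧ f a' = some c ∧
      ∀ x ∈ m, f x = none := by
  obtain ⟨k₁, l', rfl, -, h'⟩ := filterMap_eq_append_iff.1 h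
  obtain ⟨n, a, l'', rfl, -, ha, h''⟩ := filterMap_eq_cons_iff.1 h'
  obtain ⟨m, a', k₂, rfl, hm, ha', -⟩ := filterMap_eq_cons_iff.1 h''
  exact ⟨k₁ ++ n, a, m, a', k₂, by simp, ha, ha', hm⟩

theorem exists_adjacent_of_forall_or {P Q : α → Prop} {a b : α} {l : List α} (ha : P a)
    (hb : Q b) (hl : ∀ x ∈ l, P x ∨ Q x) :
    ∃ l₁ u w l₂, a :: (l ++ [b]) = l₁ ++ u :: w :: l₂ ∧ P u ∧ Q w := by
  induction l generalizing a with
  | nil => exact ⟨[], a, b, [], rfl, ha, hb⟩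
  | cons x l ih =>
    rcases hl x mem_cons_self with hx | hx
    · obtain ⟨l₁, u, w, l₂, h, hu, hw⟩ := ih hx fun y hy => hl y (mem_cons_of_mem x hy)
      exact ⟨a :: l₁, u, w, l₂, congrArg (a :: ·) h, hu, hw⟩
    · exact ⟨[], a, x, l ++ [b], rfl, ha, hx⟩

end List

lemma exists_eq_append_of_coWalk_eq {V I : Type} {q : V → I} {L : List (Step V)}
    {C₁ C₂ : List (Step I)} {cs ct : Step I} (h : coWalk q L = C₁ ++ cs :: ct :: C₂) :
    ∃ A s M t B, L = A ++ s :: (M ++ t :: B) ∧ cs = ⟨q s.a, q s.b, s.k⟩ ∧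
      ct = ⟨q t.a, q t.b, t.k⟩ ∧ ∀ u ∈ M, q u.a = q u.b := by
  obtain ⟨A, s, M, t, B, rfl, hs, ht, hM⟩ := List.exists_of_filterMap_eq_append_cons_cons h
  simp only [Option.ite_none_left_eq_some, Option.some.injEq] at hs ht
  exact ⟨A, s, M, t, B, rfl, hs.2.symm, ht.2.symm, fun u hu => by simpa using hM u hu⟩

namespace Step

variable {V : Type} {G : MixedGraph V} {s : Step V}

lemma k_ne_un_of_ok (hG : G.IsDMG) (hs : s.ok G) : s.k ≠ .un := by
  intro hk
  exact hG s.a s.b (by simpa [Step.ok, hk] using hs)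

lemma headA_or_headB_of_ok (hG : G.IsDMG) (hs : s.ok G) :
    s.headA ∨ s.headB := by
  have hun := k_ne_un_of_ok hG hs
  unfold Step.headA Step.headB
  cases hk : s.k <;> simp_all

end Step

namespace MixedGraph

variable {V I : Type} {G : MixedGraph V}

lemma IsWalk.ok_of_mem {x y : V} {L : List (Step V)} (hL : G.IsWalk x y L) :
    ∀ s ∈ L, s.ok G := by
  induction hL with
  | nil => simp
  | cons s L hok _ ih => exact List.forall_mem_cons.2 ⟨hok, ih⟩

lemma IsWalk.a_eq_of_mem_head? {x y : V} {L : List (Step V)} (hL : G.IsWalk x y L) :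
    ∀ s ∈ L.head?, s.a = x := by
  cases hL <;> simp

lemma IsWalk.isChain {x y : V} {L : List (Step V)} (hL : G.IsWalk x y L) :
    L.IsChain fun s t => s.b = t.a := by
  induction hL with
  | nil => exact .nil
  | cons s L _ hw ih =>
    exact List.isChain_cons.2 ⟨fun t ht => (hw.a_eq_of_mem_head? t ht).symm, ih⟩

lemma IsWalk.b_eq_a {x y : V} {L l₁ l₂ : List (Step V)} {s t : Step V}
    (hL : G.IsWalk x y L) (h : L = l₁ ++ s :: t :: l₂) : s.b = t.a := by
  have hinfix : [s, t] <:+: L := by simpa [h] using List.infix_append l₁ [s, t] l₂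
  simpa using hL.isChain.infix hinfix

lemma map_b_eq_of_isChain (q : V → I) {s : Step V} {M : List (Step V)}
    (hc : (s :: M).IsChain fun s t => s.b = t.a) (hM : ∀ u ∈ M, q u.a = q u.b) :
    ∀ u ∈ s :: M, q u.b = q s.b := by
  induction M generalizing s with
  | nil => simp
  | cons m M ih =>
    obtain ⟨hsm, hc⟩ := List.isChain_cons_cons.1 hc
    have hm : q m.b = q s.b := by rw [← hM m List.mem_cons_self, hsm]
    intro u hu
    rcases List.mem_cons.1 hu with rfl | hu
    · rfl
    · rw [← hm]
      exact ih hc (fun v hv => hM v (List.mem_cons_of_mem m hv)) u hu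

lemma reflTransGen_coarse_dir (q : V → I) {v d : V} (h : Relation.ReflTransGen G.dir v d) :
    Relation.ReflTransGen (G.coarse q).dir (q v) (q d) := by
  refine Relation.ReflTransGen.lift' q (fun a b hab => ?_) v d h
  show Relation.ReflTransGen _ (q a) (q b)
  by_cases hq : q a = q b
  · rw [hq]
  · exact .single ⟨hq, a, b, rfl, rfl, hab⟩

lemma Strongly.coarse (q : V → I) {a b : V} (h : G.Strongly a b) :
    (G.coarse q).Strongly (q a) (q b) :=
  ⟨reflTransGen_coarse_dir q h.1, reflTransGen_coarse_dir q h.2⟩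

lemma sigmaBlockedWalk_of_collider {S : Set V} {x y : V} {L l₁ l₂ : List (Step V)}
    {s t : Step V} (hL : L = l₁ ++ s :: t :: l₂) (hst : s.b = t.a) (hs : s.headB)
    (ht : t.headA) (hS : ∀ d, Relation.ReflTransGen G.dir s.b d → d ∉ S) :
    G.SigmaBlockedWalk S x y L := by
  obtain ⟨hs', ht'⟩ := List.getElem?_eq_some_and_getElem?_succ_eq_some_iff.2 ⟨l₁, l₂, rfl, hL⟩
  exact .inr <| .inr <| .inl ⟨l₁.length, s.b, ⟨s, t, hs', ht', rfl, hst.symm, hs, ht⟩, hS⟩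

lemma sigmaBlockedWalk_of_nonCollider {S : Set V} {x y : V} {L l₁ l₂ : List (Step V)}
    {s t : Step V} (hL : L = l₁ ++ s :: t :: l₂) (hst : s.b = t.a) (hnc : ¬ (s.headB ∧ t.headA))
    (hS : s.b ∈ S)
    (hout : ((s.k = .bw ∨ s.k = .un) ∧ ¬ G.Strongly s.b s.a) ∨
      ((t.k = .fw ∨ t.k = .un) ∧ ¬ G.Strongly t.a t.b)) :
    G.SigmaBlockedWalk S x y L := by
  obtain ⟨hs', ht'⟩ := List.getElem?_eq_some_and_getElem?_succ_eq_some_iff.2 ⟨l₁, l₂, rfl, hL⟩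
  exact .inr <| .inr <| .inr ⟨l₁.length, s, t, hs', ht', hst, hnc, hS, hout⟩

variable (q : V → I) {S : Set I} {x y : V} {A M B : List (Step V)} {s t : Step V}

lemma sigmaBlockedWalk_of_coarse_collider (hG : G.IsDMG)
    (hL : G.IsWalk x y (A ++ s :: (M ++ t :: B)))
    (hM : ∀ u ∈ M, q u.a = q u.b) (hs : s.headB) (ht : t.headA)
    (hS : ∀ D, Relation.ReflTransGen (G.coarse q).dir (q s.b) D → D ∉ S) :
    G.SigmaBlockedWalk (q ⁻¹' S) x y (A ++ s :: (M ++ t :: B)) := by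
  have hgroup : ∀ u ∈ s :: M, q u.b = q s.b := by
    refine map_b_eq_of_isChain q (hL.isChain.infix ?_) hM
    simpa using List.infix_append A (s :: M) (t :: B)
  have hmid : ∀ u ∈ M, (u.headB ∧ q u.b = q s.b) ∨ u.headA := fun u hu =>
    (Step.headA_or_headB_of_ok hG (hL.ok_of_mem u (by simp [hu]))).symm.imp
      (fun h => ⟨h, hgroup u (List.mem_cons_of_mem s hu)⟩) id
  obtain ⟨l₁, u, w, l₂, hseg, ⟨hu, hqu⟩, hw⟩ := List.exists_adjacent_of_forall_or
    (P := fun u => u.headB ∧ q u.b = q s.b) ⟨hs, rfl⟩ ht hmid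
  have hdec : A ++ s :: (M ++ t :: B) = (A ++ l₁) ++ u :: w :: (l₂ ++ B) := by
    simpa using congrArg (A ++ · ++ B) hseg
  refine sigmaBlockedWalk_of_collider hdec (hL.b_eq_a hdec) hu hw fun d hd hdS => ?_
  exact hS (q d) (hqu ▸ reflTransGen_coarse_dir q hd) hdS

lemma sigmaBlockedWalk_of_coarse_nonCollider_left (hG : G.IsDMG)
    (hL : G.IsWalk x y (A ++ s :: (M ++ t :: B))) (hs : s.k = .bw ∨ s.k = .un)
    (hS : q s.b ∈ S) (hsc : ¬ (G.coarse q).Strongly (q s.b) (q s.a)) :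
    G.SigmaBlockedWalk (q ⁻¹' S) x y (A ++ s :: (M ++ t :: B)) := by
  have hbw : s.k = .bw := hs.resolve_right (Step.k_ne_un_of_ok hG (hL.ok_of_mem s (by simp)))
  obtain ⟨n, R, hR⟩ := List.exists_cons_of_ne_nil (show M ++ t :: B ≠ [] by simp)
  rw [hR] at hL ⊢
  exact sigmaBlockedWalk_of_nonCollider rfl (hL.b_eq_a rfl) (by simp [Step.headB, hbw]) hS
    (.inl ⟨.inl hbw, fun h => hsc (h.coarse q)⟩)

lemma sigmaBlockedWalk_of_coarse_nonCollider_right (hG : G.IsDMG)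
    (hL : G.IsWalk x y (A ++ s :: (M ++ t :: B))) (ht : t.k = .fw ∨ t.k = .un)
    (hS : q t.a ∈ S) (htc : ¬ (G.coarse q).Strongly (q t.a) (q t.b)) :
    G.SigmaBlockedWalk (q ⁻¹' S) x y (A ++ s :: (M ++ t :: B)) := by
  have hfw : t.k = .fw := ht.resolve_right (Step.k_ne_un_of_ok hG (hL.ok_of_mem t (by simp)))
  obtain ⟨R, p, hR⟩ : ∃ R p, s :: M = R ++ [p] :=
    ⟨_, _, (List.dropLast_concat_getLast (List.cons_ne_nil s M)).symm⟩
  have hdec : A ++ s :: (M ++ t :: B) = (A ++ R) ++ p :: t :: B := by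
    simpa using congrArg (A ++ · ++ t :: B) hR
  have hpt := hL.b_eq_a hdec
  exact sigmaBlockedWalk_of_nonCollider hdec hpt (by simp [Step.headA, hfw]) (hpt ▸ hS)
    (.inr ⟨.inl hfw, fun h => htc (h.coarse q)⟩)

end MixedGraph

open MixedGraph in
theorem sigmaBlocked_of_coarse_sigmaBlocked_general {V I : Type} (G : MixedGraph V)
    (hDMG : G.IsDMG) (q : V → I)
    (x y : V) (L : List (Step V)) (hL : G.IsWalk x y L) (S : Set I)
    (hblock : (G.coarse q).SigmaBlockedWalk S (q x) (q y) (coWalk q L)) :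
    G.SigmaBlockedWalk (q ⁻¹' S) x y L := by
  rcases hblock with hx | hy | ⟨i, W, ⟨cs, ct, hcs, hct, rfl, -, hcsB, hctA⟩, hdesc⟩ |
      ⟨i, cs, ct, hcs, hct, hba, -, hbS, hcs_out | hct_out⟩
  · exact .inl hx
  · exact .inr (.inl hy)
  all_goals
    obtain ⟨C₁, C₂, -, hC⟩ := List.getElem?_eq_some_and_getElem?_succ_eq_some_iff.1 ⟨hcs, hct⟩
    obtain ⟨A, s, M, t, B, rfl, rfl, rfl, hM⟩ := exists_eq_append_of_coWalk_eq hC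
  · exact sigmaBlockedWalk_of_coarse_collider q hDMG hL hM hcsB hctA hdesc
  · exact sigmaBlockedWalk_of_coarse_nonCollider_left q hDMG hL hcs_out.1 hbS hcs_out.2
  · exact sigmaBlockedWalk_of_coarse_nonCollider_right q hDMG hL hct_out.1
      (by simp only at hba; exact hba ▸ hbS) hct_out.2

open MixedGraph in
/-- Let `G` be a directed mixed graph, `q` the quotient map of a
partition of its nodes and `L` a walk on `G` from `x` to `y` with induced coarse
walk `coWalk q L` on the coarse graph. If the coarse walk is σ-blocked by a set
`S` of groups, then `L` is σ-blocked by the union `T = q ⁻¹' S` of the groups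
in `S`. -/
theorem sigmaBlocked_of_coarse_sigmaBlocked {V I : Type} (G : MixedGraph V)
    (hDMG : G.IsDMG) (q : V → I) (hq : Function.Surjective q)
    (x y : V) (L : List (Step V)) (hL : G.IsWalk x y L) (S : Set I)
    (hblock : (G.coarse q).SigmaBlockedWalk S (q x) (q y) (coWalk q L)) :
    G.SigmaBlockedWalk (q ⁻¹' S) x y L :=
  sigmaBlocked_of_coarse_sigmaBlocked_general G hDMG q x y L hL S hblock
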